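/- (The oscillation points are non-stationary) With L(θ) = θ²/2 and R the smoothed W-shaped regularizer with parameter ε ∈ (0, 1/2] and λ ≥ 1, the stationary points of F(θ) = L(θ) + λR(θ) are exactly {0, λ/(ε+λ), -λ/(ε+λ)}, and for η ∈ (0, 1/2] the point θ_0 = ηλ/(2λ + (2-η)ε) is not among them; hence F'(±θ_0) ≠ 0. -/

import Mathlib

/-- The smoothed W-shaped regularizer with smoothing radius `ε`. -/
noncomputable def smoothW (ε : ℝ) (θ : ℝ) : ℝ :=
  if |θ| < ε then -θ^2/(2*ε) + 1 - ε
  else if |θ| < 1 - ε then -|θ| + 1 - ε/2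
  else if |θ| < 1 + ε then (|θ| - 1)^2/(2*ε)
  else |θ| - 1 - ε/2

noncomputable def hubAux (ε u : ℝ) : ℝ := if |u| < ε then u^2/(2*ε) else |u| - ε/2

noncomputable def hubD (ε u : ℝ) : ℝ := max (-1) (min 1 (u/ε))

lemma hubAux_neg (ε u : ℝ) : hubAux ε (-u) = hubAux ε u := by
  simp [hubAux, abs_neg, neg_pow]

lemma hubAux_of_ge {ε u : ℝ} (hε : 0 < ε) (h : ε ≤ u) : hubAux ε u = u - ε/2 := by
  have hu : 0 ≤ u := le_trans hε.le h
  rw [hubAux, if_neg, abs_of_nonneg hu]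
  rw [abs_of_nonneg hu]; linarith

lemma hubAux_of_le {ε u : ℝ} (hε : 0 < ε) (h : u ≤ -ε) : hubAux ε u = -u - ε/2 := by
  have := hubAux_of_ge hε (show ε ≤ -u by linarith)
  rw [hubAux_neg] at this; rw [this]

lemma hubAux_of_abs_le {ε u : ℝ} (hε : 0 < ε) (h : |u| ≤ ε) : hubAux ε u = u^2/(2*ε) := by
  rcases lt_or_eq_of_le h with h' | h'
  · rw [hubAux, if_pos h']
  · rw [hubAux, if_neg (by rw [h']; exact lt_irrefl _), h']
    have : u^2 = ε^2 := by rw [← sq_abs, h']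
    rw [this]; field_simp; ring

lemma hubD_of_ge {ε u : ℝ} (hε : 0 < ε) (h : ε ≤ u) : hubD ε u = 1 := by
  rw [hubD, min_eq_left ((one_le_div hε).2 h), max_eq_right (by linarith)]

lemma hubD_of_le {ε u : ℝ} (hε : 0 < ε) (h : u ≤ -ε) : hubD ε u = -1 := by
  have h1 : u/ε ≤ -1 := by rw [div_le_iff₀ hε]; linarith
  rw [hubD, min_eq_right (by linarith), max_eq_left h1]

lemma hubD_of_abs_le {ε u : ℝ} (hε : 0 < ε) (h : |u| ≤ ε) : hubD ε u = u/ε := by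
  rw [abs_le] at h
  have h1 : u/ε ≤ 1 := by rw [div_le_one hε]; exact h.2
  have h2 : -1 ≤ u/ε := by rw [le_div_iff₀ hε]; linarith [h.1]
  rw [hubD, min_eq_right h1, max_eq_right h2]

lemma quad_hasDerivAt {ε : ℝ} (hε : 0 < ε) (x : ℝ) :
    HasDerivAt (fun v : ℝ => v^2/(2*ε)) (x/ε) x := by
  have := (hasDerivAt_pow 2 x).div_const (2*ε)
  refine this.congr_deriv ?_
  push_cast
  field_simp

lemma hubD_neg' {ε : ℝ} (hε : 0 < ε) (u : ℝ) : hubD ε (-u) = -(hubD ε u) := by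
  rcases le_total u (-ε) with h | h
  · rw [hubD_of_le hε h, hubD_of_ge hε (by linarith)]; norm_num
  · rcases le_total ε u with h2 | h2
    · rw [hubD_of_ge hε h2, hubD_of_le hε (by linarith)]
    · have habs : |u| ≤ ε := abs_le.2 ⟨h, h2⟩
      have habs' : |(-u)| ≤ ε := by rw [abs_neg]; exact habs
      rw [hubD_of_abs_le hε habs, hubD_of_abs_le hε habs', neg_div]

lemma hubAux_hasDerivAt_nonneg {ε : ℝ} (hε : 0 < ε) (u : ℝ) (hu : 0 ≤ u) :
    HasDerivAt (hubAux ε) (hubD ε u) u := by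
  rcases lt_trichotomy u ε with h | h | h
  · -- interior quadratic region
    have habs : |u| < ε := by rw [abs_of_nonneg hu]; exact h
    have hev : ∀ᶠ v in nhds u, hubAux ε v = v^2/(2*ε) := by
      have hop : IsOpen {v : ℝ | |v| < ε} := isOpen_lt (continuous_abs) continuous_const
      filter_upwards [hop.mem_nhds habs] with v hv
      rw [hubAux, if_pos hv]
    have hd : HasDerivAt (fun v : ℝ => v^2/(2*ε)) (u/ε) u := quad_hasDerivAt hε u
    rw [hubD_of_abs_le hε habs.le]
    exact hd.congr_of_eventuallyEq (hev.mono fun v hv => hv)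
  · -- boundary point u = ε
    rw [h, hubD_of_ge hε le_rfl]
    have hleft : HasDerivWithinAt (hubAux ε) 1 (Set.Ioc (-ε) ε) ε := by
      have hd : HasDerivWithinAt (fun v : ℝ => v^2/(2*ε)) 1 (Set.Ioc (-ε) ε) ε := by
        have h' := (quad_hasDerivAt hε ε).hasDerivWithinAt (s := Set.Ioc (-ε) ε)
        rwa [div_self hε.ne'] at h'
      apply hd.congr_of_mem
      · intro v hv
        exact hubAux_of_abs_le hε (abs_le.2 ⟨hv.1.le, hv.2⟩)
      · exact Set.right_mem_Ioc.2 (by linarith)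
    have hright : HasDerivWithinAt (hubAux ε) 1 (Set.Ici ε) ε := by
      have hd : HasDerivWithinAt (fun v : ℝ => v - ε/2) 1 (Set.Ici ε) ε := by
        have := ((hasDerivAt_id ε).sub_const (ε/2)).hasDerivWithinAt (s := Set.Ici ε)
        exact this
      apply hd.congr_of_mem
      · intro v hv; exact hubAux_of_ge hε hv
      · exact Set.self_mem_Ici
    have hun := hleft.union hright
    rw [Set.Ioc_union_Ici_eq_Ioi (by linarith : -ε < ε)] at hun
    exact hun.hasDerivAt (Ioi_mem_nhds (by linarith))
  · -- linear region u > ε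
    have hev : ∀ᶠ v in nhds u, hubAux ε v = v - ε/2 := by
      filter_upwards [Ioi_mem_nhds h] with v hv
      exact hubAux_of_ge hε (le_of_lt hv)
    have hd : HasDerivAt (fun v : ℝ => v - ε/2) 1 u := (hasDerivAt_id u).sub_const _
    rw [hubD_of_ge hε h.le]
    exact hd.congr_of_eventuallyEq (hev.mono fun v hv => hv)

lemma hubAux_hasDerivAt {ε : ℝ} (hε : 0 < ε) (u : ℝ) :
    HasDerivAt (hubAux ε) (hubD ε u) u := by
  rcases le_or_gt 0 u with hu | hu
  · exact hubAux_hasDerivAt_nonneg hε u hu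
  · have h := hubAux_hasDerivAt_nonneg hε (-u) (by linarith)
    have hcomp := h.comp u ((hasDerivAt_id u).neg)
    have heq : (fun v : ℝ => hubAux ε (-v)) = hubAux ε := by
      funext v; exact hubAux_neg ε v
    have hcomp' : HasDerivAt (fun v : ℝ => hubAux ε (-v)) (hubD ε (-u) * (-1)) u := hcomp
    rw [heq] at hcomp'
    convert hcomp' using 1
    rw [hubD_neg' hε]; ring

lemma smoothW_neg (ε θ : ℝ) : smoothW ε (-θ) = smoothW ε θ := by
  simp [smoothW, abs_neg, neg_pow]

lemma smoothW_eq_hub_nonneg {ε : ℝ} (hε : 0 < ε) (hε' : ε ≤ 1/2) (θ : ℝ) (hθ : 0 ≤ θ) :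
    smoothW ε θ = hubAux ε (θ-1) + hubAux ε (θ+1) - hubAux ε θ - 1 := by
  have habs : |θ| = θ := abs_of_nonneg hθ
  have hp1 : hubAux ε (θ+1) = θ + 1 - ε/2 := hubAux_of_ge hε (by linarith)
  rw [smoothW, habs]
  split_ifs with h1 h2 h3
  · rw [hubAux_of_le hε (by linarith), hp1, hubAux_of_abs_le hε (by rw [habs]; linarith)]
    ring
  · rw [hubAux_of_le hε (by linarith), hp1, hubAux_of_ge hε (by linarith)]
    ring
  · rw [hubAux_of_abs_le hε (abs_le.2 ⟨by linarith, by linarith⟩), hp1,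
      hubAux_of_ge hε (by linarith)]
    ring
  · rw [hubAux_of_ge hε (by linarith), hp1, hubAux_of_ge hε (by linarith)]
    ring

lemma smoothW_eq_hub {ε : ℝ} (hε : 0 < ε) (hε' : ε ≤ 1/2) (θ : ℝ) :
    smoothW ε θ = hubAux ε (θ-1) + hubAux ε (θ+1) - hubAux ε θ - 1 := by
  rcases le_or_gt 0 θ with hθ | hθ
  · exact smoothW_eq_hub_nonneg hε hε' θ hθ
  · have := smoothW_eq_hub_nonneg hε hε' (-θ) (by linarith)
    rw [smoothW_neg] at this
    rw [this, show -θ - 1 = -(θ+1) by ring, show -θ + 1 = -(θ-1) by ring,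
      hubAux_neg, hubAux_neg, hubAux_neg]
    ring

lemma F_hasDerivAt {ε lam : ℝ} (hε : 0 < ε) (hε' : ε ≤ 1/2) (x : ℝ) :
    HasDerivAt (fun t => (1/2) * t^2 + lam * smoothW ε t)
      (x + lam * (hubD ε (x-1) + hubD ε (x+1) - hubD ε x)) x := by
  have hF : (fun t => (1/2) * t^2 + lam * smoothW ε t)
      = fun t => (1/2) * t^2 + lam * (hubAux ε (t-1) + hubAux ε (t+1) - hubAux ε t - 1) := by
    funext t; rw [smoothW_eq_hub hε hε']
  rw [hF]
  have h1 : HasDerivAt (fun t : ℝ => hubAux ε (t-1)) (hubD ε (x-1)) x := by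
    have := (hubAux_hasDerivAt hε (x-1)).comp x ((hasDerivAt_id x).sub_const 1)
    simpa [Function.comp_def] using this
  have h2 : HasDerivAt (fun t : ℝ => hubAux ε (t+1)) (hubD ε (x+1)) x := by
    have := (hubAux_hasDerivAt hε (x+1)).comp x ((hasDerivAt_id x).add_const 1)
    simpa [Function.comp_def] using this
  have h3 : HasDerivAt (fun t : ℝ => hubAux ε t) (hubD ε x) x := hubAux_hasDerivAt hε x
  have hq : HasDerivAt (fun t : ℝ => (1/2) * t^2) x x := by
    have := (hasDerivAt_pow 2 x).const_mul (1/2 : ℝ)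
    refine this.congr_deriv ?_; ring
  have := hq.add ((((h1.add h2).sub h3).sub_const 1).const_mul lam)
  exact this

/-- For `F(θ) = θ²/2 + λ R(θ)` with `R` the smoothed W-shaped regularizer,
the stationary points of `F` are exactly `{0, ±λ/(ε+λ)}`, and the oscillation
point `θ₀ = ηλ/(2λ + (2-η)ε)` of the lazy prox-gradient method is not among
them; hence `F'(±θ₀) ≠ 0`. -/
theorem lazy_oscillation_points_nonstationary (ε lam η : ℝ) (hε : 0 < ε)
    (hε' : ε ≤ 1/2) (hlam : 1 ≤ lam) (hη : 0 < η) (hη' : η ≤ 1/2) :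
    (∀ x : ℝ, deriv (fun t => (1/2) * t^2 + lam * smoothW ε t) x = 0 ↔
        x = 0 ∨ x = lam / (ε + lam) ∨ x = -(lam / (ε + lam))) ∧
    (η * lam / (2 * lam + (2 - η) * ε) ≠ 0 ∧
     η * lam / (2 * lam + (2 - η) * ε) ≠ lam / (ε + lam) ∧
     η * lam / (2 * lam + (2 - η) * ε) ≠ -(lam / (ε + lam))) ∧
    deriv (fun t => (1/2) * t^2 + lam * smoothW ε t)
        (η * lam / (2 * lam + (2 - η) * ε)) ≠ 0 ∧
    deriv (fun t => (1/2) * t^2 + lam * smoothW ε t)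
        (-(η * lam / (2 * lam + (2 - η) * ε))) ≠ 0 := by
  have hεlam : (0:ℝ) < ε + lam := by linarith
  set r : ℝ := lam / (ε + lam) with hr_def
  set g : ℝ → ℝ := fun x => x + lam * (hubD ε (x-1) + hubD ε (x+1) - hubD ε x) with hg_def
  have hderiv : ∀ x : ℝ, deriv (fun t => (1/2) * t^2 + lam * smoothW ε t) x = g x :=
    fun x => (F_hasDerivAt hε hε' x).deriv
  have hr1 : 1 - ε ≤ r := by
    rw [hr_def, le_div_iff₀ hεlam]; nlinarith
  have hr2 : r < 1 := by
    rw [hr_def, div_lt_one hεlam]; linarith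
  have hrpos : 0 < r := by
    rw [hr_def]; positivity
  have godd : ∀ x : ℝ, g (-x) = -g x := by
    intro x
    rw [hg_def]
    simp only
    rw [show -x - 1 = -(x+1) by ring, show -x + 1 = -(x-1) by ring,
      hubD_neg' hε, hubD_neg' hε, hubD_neg' hε]
    ring
  -- g vanishes at 0 and r
  have hg0 : g 0 = 0 := by
    rw [hg_def]; simp only
    rw [show (0:ℝ) - 1 = -1 by ring, show (0:ℝ) + 1 = 1 by ring,
      hubD_of_le hε (by linarith), hubD_of_ge hε (by linarith),
      hubD_of_abs_le hε (by rw [abs_zero]; linarith)]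
    ring
  have hgr : g r = 0 := by
    rw [hg_def]; simp only
    rw [hubD_of_abs_le hε (abs_le.2 ⟨by linarith, by linarith⟩),
      hubD_of_ge hε (show ε ≤ r + 1 by linarith),
      hubD_of_ge hε (show ε ≤ r by linarith)]
    rw [hr_def]
    field_simp
    ring
  -- forward direction for nonnegative x
  have hfwd : ∀ x : ℝ, 0 ≤ x → g x = 0 → x = 0 ∨ x = r := by
    intro x hx h
    rw [hg_def] at h; simp only at h
    rcases lt_or_ge x ε with hA | hA
    · rw [hubD_of_le hε (by linarith), hubD_of_ge hε (by linarith),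
        hubD_of_abs_le hε (by rw [abs_of_nonneg hx]; linarith)] at h
      left
      have h' : x * (ε - lam) = 0 := by
        field_simp at h
        nlinarith [h]
      rcases mul_eq_zero.1 h' with h'' | h''
      · exact h''
      · exfalso; linarith
    · rcases le_or_gt x (1 - ε) with hB | hB
      · rw [hubD_of_le hε (by linarith), hubD_of_ge hε (by linarith),
          hubD_of_ge hε hA] at h
        exfalso; nlinarith
      · rcases lt_or_ge x (1 + ε) with hC | hC
        · rw [hubD_of_abs_le hε (abs_le.2 ⟨by linarith, by linarith⟩),
            hubD_of_ge hε (show ε ≤ x + 1 by linarith),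
            hubD_of_ge hε (show ε ≤ x by linarith)] at h
          right
          rw [hr_def, eq_div_iff (ne_of_gt hεlam)]
          have h' : x * ε + lam * (x - 1) = 0 := by
            field_simp at h
            nlinarith [h]
          nlinarith [h']
        · rw [hubD_of_ge hε (by linarith), hubD_of_ge hε (by linarith),
            hubD_of_ge hε (by linarith)] at h
          exfalso; nlinarith
  have key : ∀ x : ℝ, deriv (fun t => (1/2) * t^2 + lam * smoothW ε t) x = 0 ↔
      x = 0 ∨ x = r ∨ x = -r := by
    intro x
    rw [hderiv]
    constructor
    · intro h
      rcases le_or_gt 0 x with hx | hx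
      · rcases hfwd x hx h with h' | h'
        · exact Or.inl h'
        · exact Or.inr (Or.inl h')
      · have h2 : g (-x) = 0 := by rw [godd, h, neg_zero]
        rcases hfwd (-x) (by linarith) h2 with h' | h'
        · exact Or.inl (by linarith)
        · exact Or.inr (Or.inr (by linarith))
    · rintro (rfl | rfl | rfl)
      · exact hg0
      · exact hgr
      · rw [godd, hgr, neg_zero]
  -- properties of θ₀
  have hD : (0:ℝ) < 2 * lam + (2 - η) * ε := by nlinarith
  set θ₀ : ℝ := η * lam / (2 * lam + (2 - η) * ε) with hθ₀_def
  have hθ₀pos : 0 < θ₀ := by rw [hθ₀_def]; positivity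
  have hne0 : θ₀ ≠ 0 := ne_of_gt hθ₀pos
  have hner : θ₀ ≠ r := by
    intro h
    rw [hθ₀_def, hr_def, div_eq_div_iff hD.ne' hεlam.ne'] at h
    have hP : 0 < lam * (2*ε*(1-η) + lam*(2-η)) := by
      have h1 : (0:ℝ) < 2*ε*(1-η) := by nlinarith
      refine mul_pos (by linarith) ?_
      nlinarith [mul_nonneg (show (0:ℝ) ≤ lam - 1 by linarith) (show (0:ℝ) ≤ 2 - η by linarith)]
    nlinarith [h, hP]
  have hnenr : θ₀ ≠ -r := by
    intro h
    have : (0:ℝ) < -r := h ▸ hθ₀pos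
    linarith
  refine ⟨fun x => key x, ⟨hne0, hner, hnenr⟩, ?_, ?_⟩
  · intro h
    rcases (key θ₀).1 h with h' | h' | h'
    · exact hne0 h'
    · exact hner h'
    · exact hnenr h'
  · intro h
    rcases (key (-θ₀)).1 h with h' | h' | h'
    · exact hne0 (by linarith)
    · exact hnenr (by linarith)
    · exact hner (by linarith)
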